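/- Let f ∈ 𝓕_n and O := O_f. The following are equivalent: (i) f is a monotone subtype; (ii) both f and f* are monotone; (iii) the support supp(f) := {s ∈ {0,1}^n : f(s) = 1} is an upset with respect to ≤_O and supp(f) ∩ {s : s ≤_O θ} = {θ}. -/

import Mathlib

open Classical

namespace HOT

/-- Binary strings of length `n`, identified with `{0,1}^n`. -/
abbrev Str (n : ℕ) := Fin n → Bool

/-- The all-zeros string `θ`. -/
def theta (n : ℕ) : Str n := fun _ => false

/-- `𝓕_n`: boolean functions on `{0,1}^n` with `f(θ) = 1`. -/
def Fcal (n : ℕ) : Set (Str n → Bool) := {f | f (theta n) = true}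

/-- The complement `f* = 1 - f + p_n`. -/
noncomputable def star {n : ℕ} (f : Str n → Bool) : Str n → Bool :=
  fun s => if s = theta n then true else !(f s)

/-- First block `s¹` of a string `s ∈ {0,1}^{m+n}`. -/
def fstStr {m n : ℕ} (s : Str (m + n)) : Str m := fun i => s (Fin.castAdd n i)

/-- Second block `s²` of a string `s ∈ {0,1}^{m+n}`. -/
def sndStr {m n : ℕ} (s : Str (m + n)) : Str n := fun j => s (Fin.natAdd m j)

/-- Tensor product `(f ⊗ g)(s) = f(s¹) · g(s²)`. -/
noncomputable def tensor {m n : ℕ} (f : Str m → Bool) (g : Str n → Bool) :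
    Str (m + n) → Bool :=
  fun s => f (fstStr s) && g (sndStr s)

/-- `f ⅋ g := (f* ⊗ g*)*`. -/
noncomputable def parr {m n : ℕ} (f : Str m → Bool) (g : Str n → Bool) :
    Str (m + n) → Bool :=
  star (tensor (star f) (star g))

/-- The causal product `f ◁ g` (`f` on the first `m` bits, `g` on the last `n` bits):
`(f ◁ g)(s) = f(s¹)` if `s¹ ≠ θ_m`, else `g(s²)`. -/
noncomputable def causalL {m n : ℕ} (f : Str m → Bool) (g : Str n → Bool) :
    Str (m + n) → Bool :=
  fun s => if fstStr s = theta m then g (sndStr s) else f (fstStr s)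

/-- The causal product `g ◁ f` (`f` on the first `m` bits, `g` on the last `n` bits):
`(g ◁ f)(s) = g(s²)` if `s² ≠ θ_n`, else `f(s¹)`. -/
noncomputable def causalR {m n : ℕ} (f : Str m → Bool) (g : Str n → Bool) :
    Str (m + n) → Bool :=
  fun s => if sndStr s = theta n then f (fstStr s) else g (sndStr s)

/-- `p_T(s) = 1` iff `s_i = 0` for all `i ∈ T`. -/
noncomputable def pSet {n : ℕ} (T : Set (Fin n)) : Str n → Bool :=
  fun s => decide (∀ i ∈ T, s i = false)

/-- The string `e^i` with `1` exactly in position `i`. -/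
def eStr {n : ℕ} (i : Fin n) : Str n := fun j => decide (j = i)

/-- The string `e^{i,j}` with `1` exactly in positions `i` and `j`. -/
def e2Str {n : ℕ} (i j : Fin n) : Str n := fun l => decide (l = i ∨ l = j)

/-- Input indices `I_f = {i : f(e^i) = 0}`. -/
def Iset {n : ℕ} (f : Str n → Bool) : Set (Fin n) := {i | f (eStr i) = false}

/-- Output indices `O_f = {j : f(e^j) = 1}`. -/
def Oset {n : ℕ} (f : Str n → Bool) : Set (Fin n) := {j | f (eStr j) = true}

/-- `f` is a subtype if `p_{I_f} ≤ f ≤ (p_{O_f})*` pointwise. -/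
def IsSubtype {n : ℕ} (f : Str n → Bool) : Prop :=
  pSet (Iset f) ≤ f ∧ f ≤ star (pSet (Oset f))

/-- The partial order `≤_O`: `s ≤_O t` iff `s_i ≤ t_i` for `i ∈ O` and `s_i ≥ t_i` for
`i ∉ O`. -/
def leO {n : ℕ} (O : Set (Fin n)) (s t : Str n) : Prop :=
  ∀ i, (i ∈ O → s i ≤ t i) ∧ (i ∉ O → t i ≤ s i)

/-- `f` is monotone (with respect to `≤_{O_f}`). -/
def MonotoneF {n : ℕ} (f : Str n → Bool) : Prop :=
  ∀ s t, leO (Oset f) s t → f s ≤ f t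

/-- The action of a permutation on strings: `σ(s)_i = s_{σ⁻¹(i)}`. -/
def permAct {n : ℕ} (σ : Equiv.Perm (Fin n)) (s : Str n) : Str n := fun i => s (σ⁻¹ i)

/-- `(f ∘ σ)(s) = f(σ(s))`. -/
def permComp {n : ℕ} (f : Str n → Bool) (σ : Equiv.Perm (Fin n)) : Str n → Bool :=
  fun s => f (permAct σ s)

/-- The inductively defined family `𝓣_n` of type functions. -/
inductive IsType : (n : ℕ) → (Str n → Bool) → Prop
  | one : IsType 1 (fun _ => true)
  | dual {n : ℕ} {f : Str n → Bool} : IsType n f → IsType n (star f)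
  | perm {n : ℕ} {f : Str n → Bool} (σ : Equiv.Perm (Fin n)) :
      IsType n f → IsType n (permComp f σ)
  | tens {m n : ℕ} {f : Str m → Bool} {g : Str n → Bool} :
      IsType m f → IsType n g → IsType (m + n) (tensor f g)

/-- Interpretation of a bit as an integer. -/
def toZ (b : Bool) : ℤ := (b.toNat : ℤ)

/-- `f` is a chain type: `f = Σ_{i=0}^N (-1)^i p_{S_i}` for a strictly increasing chain
`S_0 ⊊ ⋯ ⊊ S_N ⊆ [n]` with `N` even. -/
def IsChainType {n : ℕ} (f : Str n → Bool) : Prop :=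
  ∃ N : ℕ, Even N ∧ ∃ S : Fin (N + 1) → Set (Fin n), StrictMono S ∧
    ∀ s : Str n, toZ (f s) = ∑ i : Fin (N + 1), (-1 : ℤ) ^ (i : ℕ) * toZ (pSet (S i) s)

/-- The Möbius transform `f̂_T`. -/
noncomputable def mobius {n : ℕ} (f : Str n → Bool) (T : Set (Fin n)) : ℤ :=
  ∑ s : Str n, if ∀ j, j ∉ T → s j = true then
    (-1 : ℤ) ^ (∑ j : Fin n, if j ∈ T then (s j).toNat else 0) * toZ (f s)
  else 0

/-- The structure poset `𝓟_f = {T ⊆ [n] : f̂_T ≠ 0}`, ordered by inclusion. -/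
noncomputable def structPoset {n : ℕ} (f : Str n → Bool) : Set (Set (Fin n)) :=
  {T | mobius f T ≠ 0}

/-- The label set `L_T = T ∖ ⋃ {S ∈ 𝓟_f : S ⊊ T}`. -/
noncomputable def labels {n : ℕ} (f : Str n → Bool) (T : Set (Fin n)) : Set (Fin n) :=
  T \ ⋃₀ {S | S ∈ structPoset f ∧ S ⊂ T}

/-- The reduced structure poset `𝓟_f^0`: `∅` (if `∅ ∈ 𝓟_f`) together with all
`T ∈ 𝓟_f` with `L_T ≠ ∅`. -/
noncomputable def reducedPoset {n : ℕ} (f : Str n → Bool) : Set (Set (Fin n)) :=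
  {T | T ∈ structPoset f ∧ (T = ∅ ∨ labels f T ≠ ∅)}

/-- The rank `ρ_f(T)`: the length of a longest chain in `𝓟_f` with top element `T`
(this is the length of any maximal such chain in the graded poset `𝓟_f`). -/
noncomputable def rank {n : ℕ} (f : Str n → Bool) (T : Set (Fin n)) : ℕ :=
  sSup {k | ∃ c : Fin (k + 1) → Set (Fin n), StrictMono c ∧
    (∀ i, c i ∈ structPoset f) ∧ c (Fin.last k) = T}

/-- The rank `r(f)` of the whole poset `𝓟_f`: the common length of its maximal chains. -/
noncomputable def rk {n : ℕ} (f : Str n → Bool) : ℕ :=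
  sSup {k | ∃ c : Fin (k + 1) → Set (Fin n), StrictMono c ∧ ∀ i, c i ∈ structPoset f}

/-- `𝕋_i^f = {T ∈ 𝓟_f : i ∈ L_T}`. -/
noncomputable def Tset {n : ℕ} (f : Str n → Bool) (i : Fin n) : Set (Set (Fin n)) :=
  {T | T ∈ structPoset f ∧ i ∈ labels f T}

/-- The rank `r_f(i)` of an index: the common rank of elements of `𝕋_i^f`, or `r(f)+1`
if `𝕋_i^f = ∅` (a free output). -/
noncomputable def idxRank {n : ℕ} (f : Str n → Bool) (i : Fin n) : ℕ :=
  if (Tset f i).Nonempty then sSup (rank f '' Tset f i) else rk f + 1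

/-- `X` is the greatest lower bound of `S` and `T` in the poset `(P, ⊆)`. -/
def IsGLBIn {n : ℕ} (P : Set (Set (Fin n))) (S T X : Set (Fin n)) : Prop :=
  X ∈ P ∧ X ⊆ S ∧ X ⊆ T ∧ ∀ Y ∈ P, Y ⊆ S → Y ⊆ T → Y ⊆ X

/-- `X` is the least upper bound of `S` and `T` in the poset `(P, ⊆)`. -/
def IsLUBIn {n : ℕ} (P : Set (Set (Fin n))) (S T X : Set (Fin n)) : Prop :=
  X ∈ P ∧ S ⊆ X ∧ T ⊆ X ∧ ∀ Y ∈ P, S ⊆ Y → T ⊆ Y → X ⊆ Y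

/-- `S^↓`: the downset generated by `S` in `𝓟_f^0`. -/
noncomputable def downSet {n : ℕ} (f : Str n → Bool) (S : Set (Fin n)) :
    Set (Set (Fin n)) :=
  {X | X ∈ reducedPoset f ∧ X ⊆ S}

/-- `S^↑`: the upset generated by `S` in `𝓟_f^0`. -/
noncomputable def upSet {n : ℕ} (f : Str n → Bool) (S : Set (Fin n)) :
    Set (Set (Fin n)) :=
  {X | X ∈ reducedPoset f ∧ S ⊆ X}

/-- The pair rank `r_f(i,j)`: `max{ρ_f(S ∧ T) : S ∈ 𝕋_i^f, T ∈ 𝕋_j^f, S ∧ T exists in 𝓟_f}`;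
`-1` if this set is empty, unless `i` or `j` is a free output, in which case it is
`min{r_f(i), r_f(j)}`. -/
noncomputable def pairRank {n : ℕ} (f : Str n → Bool) (i j : Fin n) : ℤ :=
  if _h : ∃ r : ℤ, ∃ S ∈ Tset f i, ∃ T ∈ Tset f j, ∃ X, IsGLBIn (structPoset f) S T X ∧
      r = (rank f X : ℤ) then
    sSup {r : ℤ | ∃ S ∈ Tset f i, ∃ T ∈ Tset f j, ∃ X, IsGLBIn (structPoset f) S T X ∧
      r = (rank f X : ℤ)}
  else if Tset f i = ∅ ∨ Tset f j = ∅ then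
    min (idxRank f i : ℤ) (idxRank f j : ℤ)
  else -1

/-- Membership in the sublattice generated by a set `S`. -/
inductive InLatGen {α : Type*} [Lattice α] (S : Set α) : α → Prop
  | base {a : α} : a ∈ S → InLatGen S a
  | sup {a b : α} : InLatGen S a → InLatGen S b → InLatGen S (a ⊔ b)
  | inf {a b : α} : InLatGen S a → InLatGen S b → InLatGen S (a ⊓ b)

/-- For `s ≰_O θ`, `f_s` is the function with support `U_s ∪ U_θ` (w.r.t. `≤_O`). -/
noncomputable def fStr {n : ℕ} (O : Set (Fin n)) (s : Str n) : Str n → Bool :=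
  fun t => decide (leO O s t ∨ leO O (theta n) t)

/-- A string `s ∉ D_θ ∪ U_θ` is basic (for `≤_O`) if `s_j = 1` for exactly one `j ∈ O`
and `s_i = 0` for at most one `i ∈ I = Oᶜ`. -/
def IsBasic {n : ℕ} (O : Set (Fin n)) (s : Str n) : Prop :=
  ¬ leO O s (theta n) ∧ ¬ leO O (theta n) s ∧
  (∃! j, j ∈ O ∧ s j = true) ∧
  (∀ i i', i ∈ Oᶜ → i' ∈ Oᶜ → s i = false → s i' = false → i = i')

/-! Write `O = O_f`. Since `I_f = Oᶜ`, the two halves of the subtype condition say that `supp f`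
contains `{s : θ ≤_O s}` and meets `{s : s ≤_O θ}` only in `θ`. The first half follows from
monotonicity because `f(θ) = 1`. As `O_{f*} = Oᶜ`, `f*` must be monotone for the reversed
order; away from `θ` it is `¬f`, so for monotone `f` this can only fail at `θ`, and it fails
there exactly when the second half does. -/

section

variable {n : ℕ}

lemma leO_refl (O : Set (Fin n)) (s : Str n) : leO O s s :=
  fun _ => ⟨fun _ => le_rfl, fun _ => le_rfl⟩

lemma theta_leO_iff {O : Set (Fin n)} {s : Str n} :
    leO O (theta n) s ↔ ∀ i ∉ O, s i = false := by
  simp [leO, theta, Bool.le_iff_imp]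

lemma leO_theta_iff {O : Set (Fin n)} {s : Str n} :
    leO O s (theta n) ↔ ∀ i ∈ O, s i = false := by
  simp [leO, theta, Bool.le_iff_imp]

lemma leO_compl_iff {O : Set (Fin n)} {s t : Str n} : leO Oᶜ s t ↔ leO O t s := by
  simp only [leO, Set.mem_compl_iff, not_not]
  exact forall_congr' fun _ => and_comm

lemma pSet_eq_true_iff {T : Set (Fin n)} {s : Str n} :
    pSet T s = true ↔ ∀ i ∈ T, s i = false :=
  decide_eq_true_iff

lemma eStr_ne_theta (i : Fin n) : eStr i ≠ theta n :=
  fun h => by simpa [eStr, theta] using congrFun h i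

lemma star_theta (f : Str n → Bool) : star f (theta n) = true := if_pos rfl

lemma star_of_ne_theta (f : Str n → Bool) {s : Str n} (hs : s ≠ theta n) :
    star f s = !f s :=
  if_neg hs

lemma Iset_eq_compl_Oset (f : Str n → Bool) : Iset f = (Oset f)ᶜ := by
  ext i
  simp [Iset, Oset]

lemma Oset_star (f : Str n → Bool) : Oset (star f) = (Oset f)ᶜ := by
  ext i
  simp [Oset, star_of_ne_theta f (eStr_ne_theta i)]

lemma monotoneF_iff_upset (f : Str n → Bool) :
    MonotoneF f ↔ ∀ s t, f s = true → leO (Oset f) s t → f t = true := by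
  simp only [MonotoneF, Bool.le_iff_imp]
  exact forall₂_congr fun _ _ => Imp.swap

lemma pSet_compl_le_iff {O : Set (Fin n)} {f : Str n → Bool} :
    pSet Oᶜ ≤ f ↔ ∀ s, leO O (theta n) s → f s = true := by
  simp only [Pi.le_def, Bool.le_iff_imp, pSet_eq_true_iff, theta_leO_iff, Set.mem_compl_iff]

lemma le_star_pSet_iff {O : Set (Fin n)} {f : Str n → Bool} :
    f ≤ star (pSet O) ↔ ∀ s, f s = true → leO O s (theta n) → s = theta n := by
  refine forall_congr' fun s => ?_
  by_cases hs : s = theta n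
  · simp [hs, star_theta]
  · simp [Bool.le_iff_imp, star_of_ne_theta _ hs, hs, pSet, leO_theta_iff]

lemma isSubtype_iff (f : Str n → Bool) :
    IsSubtype f ↔ (∀ s, leO (Oset f) (theta n) s → f s = true) ∧
      ∀ s, f s = true → leO (Oset f) s (theta n) → s = theta n := by
  rw [IsSubtype, Iset_eq_compl_Oset, pSet_compl_le_iff, le_star_pSet_iff]

lemma eq_theta_of_monotoneF_star {f : Str n → Bool} (hm : MonotoneF (star f)) {s : Str n}
    (hs : f s = true) (hsθ : leO (Oset f) s (theta n)) : s = theta n := by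
  by_contra hne
  have hle : star f (theta n) ≤ star f s :=
    hm _ _ (by rwa [Oset_star, leO_compl_iff])
  simp [star_theta, star_of_ne_theta f hne, hs, Bool.le_iff_imp] at hle

lemma monotoneF_star_of_upset {f : Str n → Bool}
    (hup : ∀ s t, f s = true → leO (Oset f) s t → f t = true)
    (hθ : ∀ s, f s = true → leO (Oset f) s (theta n) → s = theta n) :
    MonotoneF (star f) := by
  intro s t hst
  rw [Oset_star, leO_compl_iff] at hst
  by_cases ht : t = theta n
  · simp [ht, star_theta]
  rw [star_of_ne_theta f ht, Bool.le_iff_imp]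
  intro hs
  cases hft : f t
  · rfl
  by_cases hsθ : s = theta n
  · subst hsθ
    exact absurd (hθ t hft hst) ht
  · simp [star_of_ne_theta f hsθ, hup t s hft hst] at hs

lemma monotoneF_star_iff {f : Str n → Bool} (hm : MonotoneF f) :
    MonotoneF (star f) ↔ ∀ s, f s = true → leO (Oset f) s (theta n) → s = theta n :=
  ⟨fun h _ => eq_theta_of_monotoneF_star h,
    monotoneF_star_of_upset ((monotoneF_iff_upset f).1 hm)⟩

lemma isSubtype_and_monotoneF_iff {f : Str n → Bool} (hf : f ∈ Fcal n) :
    IsSubtype f ∧ MonotoneF f ↔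
      MonotoneF f ∧ ∀ s, f s = true → leO (Oset f) s (theta n) → s = theta n := by
  rw [isSubtype_iff]
  exact ⟨fun ⟨⟨_, hθ⟩, hm⟩ => ⟨hm, hθ⟩,
    fun ⟨hm, hθ⟩ => ⟨⟨fun s => (monotoneF_iff_upset f).1 hm _ s hf, hθ⟩, hm⟩⟩

lemma inter_setOf_leO_theta_eq_singleton_iff {O : Set (Fin n)} {f : Str n → Bool}
    (hf : f ∈ Fcal n) :
    {s | f s = true} ∩ {s | leO O s (theta n)} = {theta n} ↔
      ∀ s, f s = true → leO O s (theta n) → s = theta n := by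
  rw [Set.eq_singleton_iff_unique_mem]
  exact ⟨fun h s hs hsθ => h.2 s ⟨hs, hsθ⟩,
    fun h => ⟨⟨hf, leO_refl O _⟩, fun s ⟨hs, hsθ⟩ => h s hs hsθ⟩⟩

end

/-- for `f ∈ 𝓕_n` with `O = O_f`, the following are equivalent:
(i) `f` is a monotone subtype; (ii) `f` and `f*` are both monotone;
(iii) `supp(f)` is an upset w.r.t. `≤_O` and `supp(f) ∩ {s : s ≤_O θ} = {θ}`. -/
theorem stmt8 {n : ℕ} (f : Str n → Bool) (hf : f ∈ Fcal n) :
    ((IsSubtype f ∧ MonotoneF f) ↔ (MonotoneF f ∧ MonotoneF (star f))) ∧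
    ((IsSubtype f ∧ MonotoneF f) ↔
      ((∀ s t, f s = true → leO (Oset f) s t → f t = true) ∧
        {s | f s = true} ∩ {s | leO (Oset f) s (theta n)} = {theta n})) := by
  rw [isSubtype_and_monotoneF_iff hf, inter_setOf_leO_theta_eq_singleton_iff hf,
    ← monotoneF_iff_upset]
  exact ⟨(and_congr_right monotoneF_star_iff).symm, Iff.rfl⟩

end HOT
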